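/- Suppose Λ(x₁) is positive definite and set e := −g(x₁). Let r ∈ (0, 1/2], let t ∈ ℝ^U, and let c > 0 satisfy c ≥ ((1 + r)/r)·‖t‖*_{x₁}. Then: (i) Λ(H(c⁻¹·x₁)⁻¹·(t + c·e)) is positive semidefinite (i.e., c⁻¹·x₁, and hence x₁, is a dual certificate of t + c·e); and (ii) if y_c ∈ ℝ^U satisfies Λ(y_c) positive definite and −g(y_c) = t + c·e, then ‖c⁻¹·x₁ − y_c‖_{c⁻¹·x₁} ≤ r. -/

import Mathlib

/-!
Write `A = Λ(x)` and `S = A^{-1/2} Λ(v) A^{-1/2}`, so that `‖v‖_x² = tr S²`. Since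
`|zᵀ S z| ≤ ‖S‖_F |z|²`, the matrix `Λ(x + v) = A^{1/2} (1 + S) A^{1/2}` is positive semidefinite
as soon as `‖v‖_x ≤ 1` (the Dikin ellipsoid lies in the cone). For `v = x - y` with `Λ(y)` positive
definite, `1 - S = A^{-1/2} Λ(y) A^{-1/2}` is positive definite and
`⟨x - y, g(x) - g(y)⟩ = tr(S (1 - S)⁻¹ S) ≥ q² / (1 + q)` with `q = ‖x - y‖_x`, while the left side
is at most `‖g(x) - g(y)‖*_x · q`; so `‖g(x) - g(y)‖*_x ≤ r / (1 + r)` forces `q ≤ r`.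

The barrier is logarithmically homogeneous: at `x = c⁻¹ x₁` we have `-g(x) = c e = H(x) x` and
`‖t‖*_x = c⁻¹ ‖t‖*_{x₁} ≤ r / (1 + r)`. Hence `H(x)⁻¹ (t + c e) = x + H(x)⁻¹ t` with
`‖H(x)⁻¹ t‖_x = ‖t‖*_x ≤ 1`, and `g(x) - g(y_c) = t`.
-/

open Matrix

/-- The gradient of the barrier `f(x) = -log det Λ(x)`:
`g(x)_i = -tr(Λ(x)⁻¹ · Λ(e_i))` (with the total matrix inverse, `0` for singular matrices). -/
noncomputable def grad {U L : ℕ} (Lam : (Fin U → ℝ) →ₗ[ℝ] Matrix (Fin L) (Fin L) ℝ)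
    (x : Fin U → ℝ) : Fin U → ℝ :=
  fun i => -((Lam x)⁻¹ * Lam (Pi.single i 1)).trace

/-- The Hessian of the barrier: `H(x)_{ij} = tr(Λ(x)⁻¹ Λ(e_i) Λ(x)⁻¹ Λ(e_j))`. -/
noncomputable def hess {U L : ℕ} (Lam : (Fin U → ℝ) →ₗ[ℝ] Matrix (Fin L) (Fin L) ℝ)
    (x : Fin U → ℝ) : Matrix (Fin U) (Fin U) ℝ :=
  Matrix.of fun i j =>
    ((Lam x)⁻¹ * Lam (Pi.single i 1) * (Lam x)⁻¹ * Lam (Pi.single j 1)).trace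

/-- The local norm `‖v‖_x = (vᵀ H(x) v)^{1/2}`. -/
noncomputable def locNorm {U L : ℕ} (Lam : (Fin U → ℝ) →ₗ[ℝ] Matrix (Fin L) (Fin L) ℝ)
    (x v : Fin U → ℝ) : ℝ :=
  Real.sqrt (v ⬝ᵥ (hess Lam x).mulVec v)

/-- The dual local norm `‖t‖*_x = (tᵀ H(x)⁻¹ t)^{1/2}`. -/
noncomputable def dualNorm {U L : ℕ} (Lam : (Fin U → ℝ) →ₗ[ℝ] Matrix (Fin L) (Fin L) ℝ)
    (x t : Fin U → ℝ) : ℝ :=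
  Real.sqrt (t ⬝ᵥ (hess Lam x)⁻¹.mulVec t)

namespace Matrix

variable {n : Type*} [Fintype n]

lemma dotProduct_self_nonneg {R : Type*} [Ring R] [LinearOrder R] [IsStrictOrderedRing R]
    (z : n → R) : 0 ≤ z ⬝ᵥ z :=
  Finset.sum_nonneg fun i _ => mul_self_nonneg (z i)

lemma IsSymm.dotProduct_mulVec_comm {A : Matrix n n ℝ} (hA : A.IsSymm) (v w : n → ℝ) :
    v ⬝ᵥ A *ᵥ w = w ⬝ᵥ A *ᵥ v := by
  rw [dotProduct_mulVec, ← mulVec_transpose, hA.eq, dotProduct_comm]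

lemma IsSymm.conj {B : Matrix n n ℝ} (hB : B.IsSymm) {R : Matrix n n ℝ} (hR : R.IsSymm) :
    (R * B * R).IsSymm := by
  rw [IsSymm, transpose_mul, transpose_mul, hB.eq, hR.eq, mul_assoc]

lemma IsSymm.trace_mul_self {N : Matrix n n ℝ} (hN : N.IsSymm) :
    (N * N).trace = ∑ i, ∑ j, N i j ^ 2 := by
  simp only [trace, diag, mul_apply, sq]
  exact Finset.sum_congr rfl fun i _ => Finset.sum_congr rfl fun j _ => by rw [hN.apply i j]

lemma IsSymm.trace_mul_self_nonneg {N : Matrix n n ℝ} (hN : N.IsSymm) : 0 ≤ (N * N).trace := by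
  rw [hN.trace_mul_self]
  positivity

lemma IsSymm.abs_dotProduct_mulVec_le {N : Matrix n n ℝ} (hN : N.IsSymm) (z : n → ℝ) :
    |z ⬝ᵥ N *ᵥ z| ≤ √(N * N).trace * (z ⬝ᵥ z) := by
  have hquad : z ⬝ᵥ N *ᵥ z = ∑ p : n × n, z p.1 * z p.2 * N p.1 p.2 := by
    simp only [Fintype.sum_prod_type, dotProduct, mulVec, Finset.mul_sum]
    exact Finset.sum_congr rfl fun i _ => Finset.sum_congr rfl fun j _ => by ring
  have hzz : ∑ p : n × n, (z p.1 * z p.2) ^ 2 = (z ⬝ᵥ z) ^ 2 := by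
    simp only [Fintype.sum_prod_type, dotProduct, sq, Finset.sum_mul_sum]
    exact Finset.sum_congr rfl fun i _ => Finset.sum_congr rfl fun j _ => by ring
  have hNN : ∑ p : n × n, N p.1 p.2 ^ 2 = (N * N).trace := by
    rw [hN.trace_mul_self, Fintype.sum_prod_type]
  have hcs := Finset.sum_mul_sq_le_sq_mul_sq Finset.univ
    (fun p : n × n => z p.1 * z p.2) (fun p => N p.1 p.2)
  rw [hzz, hNN, ← hquad] at hcs
  calc |z ⬝ᵥ N *ᵥ z| ≤ √((z ⬝ᵥ z) ^ 2 * (N * N).trace) := Real.abs_le_sqrt hcs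
    _ = √(N * N).trace * (z ⬝ᵥ z) := by
      rw [Real.sqrt_mul (sq_nonneg _), Real.sqrt_sq (dotProduct_self_nonneg z), mul_comm]

lemma PosSemidef.dotProduct_mulVec_sq_le {H : Matrix n n ℝ} (hH : H.PosSemidef) (v w : n → ℝ) :
    (v ⬝ᵥ H *ᵥ w) ^ 2 ≤ (v ⬝ᵥ H *ᵥ v) * (w ⬝ᵥ H *ᵥ w) := by
  let := H.toSeminormedAddCommGroup hH
  let := H.toInnerProductSpace hH
  have hinner (a b : n → ℝ) : inner ℝ a b = a ⬝ᵥ H *ᵥ b := by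
    change (H *ᵥ b) ⬝ᵥ star a = _
    rw [star_trivial, dotProduct_comm]
  have hcs := real_inner_mul_inner_self_le v w
  rwa [hinner, hinner, hinner, ← sq] at hcs

lemma IsSymm.trace_mul_self_div_le {S C : Matrix n n ℝ} (hS : S.IsSymm) {k : ℝ}
    (hle : ∀ z, z ⬝ᵥ z / k ≤ z ⬝ᵥ C *ᵥ z) :
    (S * S).trace / k ≤ (S * C * S).trace := by
  have hSCS : (S * C * S).trace = ∑ i, S i ⬝ᵥ C *ᵥ S i := by
    simp only [trace, diag, mul_apply, dotProduct, mulVec, Finset.mul_sum, Finset.sum_mul]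
    refine Finset.sum_congr rfl fun i _ => ?_
    rw [Finset.sum_comm]
    exact Finset.sum_congr rfl fun j _ => Finset.sum_congr rfl fun l _ => by
      rw [hS.apply i l]; ring
  have hSS : (S * S).trace = ∑ i, S i ⬝ᵥ S i := by
    simp only [trace, diag, mul_apply, dotProduct]
    exact Finset.sum_congr rfl fun i _ => Finset.sum_congr rfl fun j _ => by rw [hS.apply i j]
  rw [hSCS, hSS, Finset.sum_div]
  exact Finset.sum_le_sum fun i _ => hle (S i)

variable [DecidableEq n]

lemma PosDef.isUnit_det {A : Matrix n n ℝ} (hA : A.PosDef) : IsUnit A.det :=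
  (isUnit_iff_isUnit_det A).mp hA.isUnit

lemma inv_smul_of_ne_zero {A : Matrix n n ℝ} (hA : IsUnit A.det) {c : ℝ} (hc : c ≠ 0) :
    (c • A)⁻¹ = c⁻¹ • A⁻¹ :=
  inv_smul' A (Units.mk0 c hc) hA

lemma trace_mul_inv_one_sub_mul {S : Matrix n n ℝ} (hS : IsUnit (1 - S).det) :
    (S * (1 - S)⁻¹ * S).trace
      = (1 - S)⁻¹.trace - 2 * (1 : Matrix n n ℝ).trace + (1 - S).trace := by
  obtain ⟨M, rfl⟩ : ∃ M, S = 1 - M := ⟨1 - S, (sub_sub_cancel 1 S).symm⟩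
  rw [sub_sub_cancel] at hS ⊢
  rw [sub_mul, one_mul, mul_nonsing_inv _ hS, sub_mul, one_mul, mul_sub, mul_one,
    nonsing_inv_mul _ hS]
  simp only [trace_sub]
  ring

lemma IsSymm.posSemidef_one_add {N : Matrix n n ℝ} (hN : N.IsSymm) (h : (N * N).trace ≤ 1) :
    (1 + N).PosSemidef := by
  refine .of_dotProduct_mulVec_nonneg (isHermitian_one.add (isHermitian_iff_isSymm.mpr hN))
    fun z => ?_
  have hquad := (abs_le.mp (hN.abs_dotProduct_mulVec_le z)).1
  have hsqrt : √(N * N).trace ≤ 1 := Real.sqrt_le_one.mpr h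
  have hzz := dotProduct_self_nonneg z
  rw [star_trivial, add_mulVec, one_mulVec, dotProduct_add]
  nlinarith

lemma PosDef.dotProduct_div_le_dotProduct_inv_mulVec {M : Matrix n n ℝ} (hM : M.PosDef) {k : ℝ}
    (hk : 0 < k) (hle : ∀ z, z ⬝ᵥ M *ᵥ z ≤ k * (z ⬝ᵥ z)) (z : n → ℝ) :
    z ⬝ᵥ z / k ≤ z ⬝ᵥ M⁻¹ *ᵥ z := by
  have hMM : M * M⁻¹ = 1 := mul_nonsing_inv M hM.isUnit_det
  have hcs := hM.posSemidef.dotProduct_mulVec_sq_le z (M⁻¹ *ᵥ z)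
  rw [mulVec_mulVec, hMM, one_mulVec, dotProduct_comm (M⁻¹ *ᵥ z)] at hcs
  have hinv : 0 ≤ z ⬝ᵥ M⁻¹ *ᵥ z := by
    simpa using hM.inv.posSemidef.dotProduct_mulVec_nonneg z
  have hzz := dotProduct_self_nonneg z
  rw [div_le_iff₀ hk]
  rcases hzz.eq_or_lt with h0 | h0
  · rw [← h0]
    positivity
  · nlinarith [mul_le_mul_of_nonneg_right (hle z) hinv]

/-- `0 < 1 - S ≤ 1 + ‖S‖_F`, hence `(1 - S)⁻¹ ≥ (1 + ‖S‖_F)⁻¹`. -/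
lemma IsSymm.trace_mul_self_div_le_trace_mul_inv_mul {S : Matrix n n ℝ} (hS : S.IsSymm)
    (hpos : (1 - S).PosDef) :
    (S * S).trace / (1 + √(S * S).trace) ≤ (S * (1 - S)⁻¹ * S).trace := by
  refine hS.trace_mul_self_div_le (hpos.dotProduct_div_le_dotProduct_inv_mulVec
    (by positivity) fun z => ?_)
  have hquad := (abs_le.mp (hS.abs_dotProduct_mulVec_le z)).1
  rw [sub_mulVec, one_mulVec, dotProduct_sub]
  linarith

lemma PosDef.exists_isSymm_mul_self_eq_inv {A : Matrix n n ℝ} (hA : A.PosDef) :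
    ∃ R : Matrix n n ℝ, R.IsSymm ∧ IsUnit R ∧ R * R = A⁻¹ ∧ R * A * R = 1 := by
  open scoped MatrixOrder in
  have hAinv : 0 ≤ A⁻¹ := hA.inv.posSemidef.nonneg
  have hRR : CFC.sqrt A⁻¹ * CFC.sqrt A⁻¹ = A⁻¹ := CFC.sqrt_mul_sqrt_self _ hAinv
  have hR : IsUnit (CFC.sqrt A⁻¹) :=
    (CFC.isUnit_sqrt_iff _ hAinv).mpr (isUnit_nonsing_inv_iff.mpr hA.isUnit)
  refine ⟨CFC.sqrt A⁻¹, ?_, hR, hRR, hR.mul_left_inj.mp ?_⟩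
  · exact isHermitian_iff_isSymm.mp (CFC.sqrt_nonneg A⁻¹).posSemidef.isHermitian
  · rw [one_mul, mul_assoc, hRR, mul_assoc, mul_nonsing_inv A hA.isUnit_det, mul_one]

end Matrix

lemma LinearMap.apply_eq_sum_smul_single {ι R M : Type*} [Fintype ι] [DecidableEq ι]
    [Semiring R] [AddCommMonoid M] [Module R M] (f : (ι → R) →ₗ[R] M) (v : ι → R) :
    f v = ∑ i, v i • f (Pi.single i 1) := by
  conv_lhs => rw [pi_eq_sum_univ' v]
  simp only [map_sum, map_smul]

lemma le_of_sq_div_one_add_le {q r : ℝ} (hq : 0 ≤ q) (hr : 0 < r)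
    (h : q ^ 2 / (1 + q) ≤ r / (1 + r) * q) : q ≤ r := by
  rw [div_mul_eq_mul_div, div_le_div_iff₀ (by positivity) (by positivity)] at h
  nlinarith

section Barrier

variable {U L : ℕ} (Lam : (Fin U → ℝ) →ₗ[ℝ] Matrix (Fin L) (Fin L) ℝ)

lemma dotProduct_neg_grad (x v : Fin U → ℝ) :
    v ⬝ᵥ -grad Lam x = ((Lam x)⁻¹ * Lam v).trace := by
  simp only [LinearMap.apply_eq_sum_smul_single Lam v, Matrix.mul_sum, trace_sum,
    Matrix.mul_smul, trace_smul, dotProduct, grad, Pi.neg_apply, neg_neg, smul_eq_mul]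

lemma dotProduct_hess_mulVec (x v w : Fin U → ℝ) :
    v ⬝ᵥ hess Lam x *ᵥ w = ((Lam x)⁻¹ * Lam v * (Lam x)⁻¹ * Lam w).trace := by
  simp only [LinearMap.apply_eq_sum_smul_single Lam v, LinearMap.apply_eq_sum_smul_single Lam w,
    Matrix.sum_mul, Matrix.mul_smul, Matrix.smul_mul, trace_sum, trace_smul, smul_eq_mul,
    dotProduct, mulVec, hess, of_apply, Finset.mul_sum]
  rw [Finset.sum_comm]
  exact Finset.sum_congr rfl fun i _ => Finset.sum_congr rfl fun j _ => by ring

lemma isSymm_hess (x : Fin U → ℝ) : (hess Lam x).IsSymm := by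
  refine IsSymm.ext fun i j => ?_
  simp only [hess, of_apply]
  rw [mul_assoc _ (Lam x)⁻¹, trace_mul_comm, ← mul_assoc]

lemma hess_mulVec_self {x : Fin U → ℝ} (hx : IsUnit (Lam x).det) :
    hess Lam x *ᵥ x = -grad Lam x := by
  funext i
  have hcoord (w : Fin U → ℝ) : w i = Pi.single i 1 ⬝ᵥ w := by simp
  rw [hcoord (hess Lam x *ᵥ x), hcoord (-grad Lam x), dotProduct_hess_mulVec,
    dotProduct_neg_grad, mul_assoc _ (Lam x)⁻¹, nonsing_inv_mul _ hx, mul_one]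

lemma dotProduct_hess_mulVec_self_eq_trace {x : Fin U → ℝ} {R : Matrix (Fin L) (Fin L) ℝ}
    (hRR : R * R = (Lam x)⁻¹) (v : Fin U → ℝ) :
    v ⬝ᵥ hess Lam x *ᵥ v = (R * Lam v * R * (R * Lam v * R)).trace := by
  rw [dotProduct_hess_mulVec, ← hRR]
  simp only [mul_assoc]
  rw [trace_mul_comm R]
  simp only [mul_assoc]

lemma grad_smul {x : Fin U → ℝ} (hx : IsUnit (Lam x).det) {c : ℝ} (hc : c ≠ 0) :
    grad Lam (c • x) = c⁻¹ • grad Lam x := by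
  funext i
  simp only [grad, map_smul, inv_smul_of_ne_zero hx hc, Matrix.smul_mul, trace_smul,
    Pi.smul_apply, smul_eq_mul, mul_neg]

lemma hess_smul {x : Fin U → ℝ} (hx : IsUnit (Lam x).det) {c : ℝ} (hc : c ≠ 0) :
    hess Lam (c • x) = (c⁻¹ ^ 2) • hess Lam x := by
  ext i j
  simp only [hess, of_apply, map_smul, inv_smul_of_ne_zero hx hc, Matrix.smul_mul,
    Matrix.mul_smul, trace_smul, Matrix.smul_apply, smul_eq_mul]
  ring

lemma dualNorm_smul {x : Fin U → ℝ} (hx : IsUnit (Lam x).det) (hH : IsUnit (hess Lam x).det)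
    {c : ℝ} (hc : c ≠ 0) (t : Fin U → ℝ) :
    dualNorm Lam (c • x) t = |c| * dualNorm Lam x t := by
  have hH' : (hess Lam (c • x))⁻¹ = c ^ 2 • (hess Lam x)⁻¹ := by
    rw [hess_smul Lam hx hc, inv_smul_of_ne_zero hH (by positivity), inv_pow, inv_inv]
  rw [dualNorm, dualNorm, hH', smul_mulVec, dotProduct_smul, smul_eq_mul,
    Real.sqrt_mul (sq_nonneg c), Real.sqrt_sq_eq_abs]

lemma posDef_hess (hinj : Function.Injective Lam) (hsym : ∀ v, (Lam v).IsSymm)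
    {x : Fin U → ℝ} (hx : (Lam x).PosDef) : (hess Lam x).PosDef := by
  obtain ⟨R, hRs, hRu, hRR, -⟩ := hx.exists_isSymm_mul_self_eq_inv
  refine .of_dotProduct_mulVec_pos (isHermitian_iff_isSymm.mpr (isSymm_hess Lam x))
    fun v hv => ?_
  have hN : (R * Lam v * R).IsSymm := (hsym v).conj hRs
  have hN0 : R * Lam v * R ≠ 0 := by
    rwa [Ne, hRu.mul_left_eq_zero, hRu.mul_right_eq_zero, map_eq_zero_iff Lam hinj]
  rw [star_trivial, dotProduct_hess_mulVec_self_eq_trace Lam hRR]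
  nth_rw 1 [← hN.eq, ← conjTranspose_eq_transpose_of_trivial]
  exact (posSemidef_conjTranspose_mul_self _).trace_nonneg.lt_of_ne'
    (trace_conjTranspose_mul_self_eq_zero_iff.not.mpr hN0)

lemma locNorm_hess_inv_mulVec {x : Fin U → ℝ} (hH : (hess Lam x).PosDef) (t : Fin U → ℝ) :
    locNorm Lam x ((hess Lam x)⁻¹ *ᵥ t) = dualNorm Lam x t := by
  rw [locNorm, dualNorm, mulVec_mulVec,
    mul_nonsing_inv _ hH.isUnit_det, one_mulVec, dotProduct_comm]

lemma dotProduct_le_dualNorm_mul_locNorm {x : Fin U → ℝ} (hH : (hess Lam x).PosDef)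
    (t v : Fin U → ℝ) : v ⬝ᵥ t ≤ dualNorm Lam x t * locNorm Lam x v := by
  set w := (hess Lam x)⁻¹ *ᵥ t
  have hw : v ⬝ᵥ t = w ⬝ᵥ hess Lam x *ᵥ v := by
    rw [(isSymm_hess Lam x).dotProduct_mulVec_comm, mulVec_mulVec,
      mul_nonsing_inv _ hH.isUnit_det, one_mulVec]
  have hw_nonneg : 0 ≤ w ⬝ᵥ hess Lam x *ᵥ w := by
    simpa only [star_trivial] using hH.posSemidef.dotProduct_mulVec_nonneg w
  rw [← locNorm_hess_inv_mulVec Lam hH, locNorm, locNorm, ← Real.sqrt_mul hw_nonneg, hw]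
  exact (le_abs_self _).trans (Real.abs_le_sqrt (hH.posSemidef.dotProduct_mulVec_sq_le w v))

theorem posSemidef_add_of_locNorm_le_one (hsym : ∀ v, (Lam v).IsSymm) {x w : Fin U → ℝ}
    (hx : (Lam x).PosDef) (hw : locNorm Lam x w ≤ 1) : (Lam (x + w)).PosSemidef := by
  obtain ⟨R, hRs, hRu, hRR, hRAR⟩ := hx.exists_isSymm_mul_self_eq_inv
  rw [locNorm, dotProduct_hess_mulVec_self_eq_trace Lam hRR, Real.sqrt_le_one] at hw
  have hRstar : star R = R := (isHermitian_iff_isSymm.mpr hRs).star_eq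
  rw [← hRu.posSemidef_star_right_conjugate_iff, hRstar, map_add, mul_add, add_mul, hRAR]
  exact ((hsym w).conj hRs).posSemidef_one_add hw

lemma sub_dotProduct_grad_sub {x y : Fin U → ℝ} (hx : IsUnit (Lam x).det)
    (hy : IsUnit (Lam y).det) :
    (x - y) ⬝ᵥ (grad Lam x - grad Lam y) = ((Lam y)⁻¹ * Lam x).trace
      - 2 * (1 : Matrix (Fin L) (Fin L) ℝ).trace + ((Lam x)⁻¹ * Lam y).trace := by
  have hsplit : (x - y) ⬝ᵥ (grad Lam x - grad Lam y)
      = (x - y) ⬝ᵥ -grad Lam y - (x - y) ⬝ᵥ -grad Lam x := by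
    simp only [dotProduct_neg, dotProduct_sub]
    ring
  rw [hsplit, dotProduct_neg_grad, dotProduct_neg_grad, map_sub, Matrix.mul_sub, Matrix.mul_sub,
    trace_sub, trace_sub, nonsing_inv_mul _ hx, nonsing_inv_mul _ hy]
  ring

theorem locNorm_sq_div_le_dotProduct_grad_sub (hsym : ∀ v, (Lam v).IsSymm) {x y : Fin U → ℝ}
    (hx : (Lam x).PosDef) (hy : (Lam y).PosDef) :
    locNorm Lam x (x - y) ^ 2 / (1 + locNorm Lam x (x - y))
      ≤ (x - y) ⬝ᵥ (grad Lam x - grad Lam y) := by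
  obtain ⟨R, hRs, hRu, hRR, hRAR⟩ := hx.exists_isSymm_mul_self_eq_inv
  set S := R * Lam (x - y) * R with hSdef
  have hS : S.IsSymm := (hsym _).conj hRs
  have hM : 1 - S = R * Lam y * R := by
    rw [hSdef, map_sub, Matrix.mul_sub, Matrix.sub_mul, hRAR, sub_sub_cancel]
  have hMpd : (1 - S).PosDef := by
    have hRstar : star R = R := (isHermitian_iff_isSymm.mpr hRs).star_eq
    rw [hM]
    nth_rw 2 [← hRstar]
    exact hRu.posDef_star_right_conjugate_iff.mpr hy
  have htr : (S * (1 - S)⁻¹ * S).trace = (x - y) ⬝ᵥ (grad Lam x - grad Lam y) := by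
    rw [sub_dotProduct_grad_sub Lam hx.isUnit_det hy.isUnit_det,
      trace_mul_inv_one_sub_mul hMpd.isUnit_det, hM, Matrix.mul_inv_rev, Matrix.mul_inv_rev,
      trace_mul_comm R⁻¹, mul_assoc, ← Matrix.mul_inv_rev, hRR,
      nonsing_inv_nonsing_inv _ hx.isUnit_det, trace_mul_comm (R * Lam y), ← mul_assoc, hRR]
  rw [locNorm, dotProduct_hess_mulVec_self_eq_trace Lam hRR, Real.sq_sqrt hS.trace_mul_self_nonneg,
    ← htr]
  exact hS.trace_mul_self_div_le_trace_mul_inv_mul hMpd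

theorem locNorm_sub_le_of_dualNorm_grad_sub_le (hinj : Function.Injective Lam)
    (hsym : ∀ v, (Lam v).IsSymm) {x y : Fin U → ℝ} (hx : (Lam x).PosDef) (hy : (Lam y).PosDef)
    {r : ℝ} (hr : 0 < r) (h : dualNorm Lam x (grad Lam x - grad Lam y) ≤ r / (1 + r)) :
    locNorm Lam x (x - y) ≤ r := by
  have hq : 0 ≤ locNorm Lam x (x - y) := Real.sqrt_nonneg _
  have hcs := dotProduct_le_dualNorm_mul_locNorm Lam (posDef_hess Lam hinj hsym hx)
    (grad Lam x - grad Lam y) (x - y)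
  exact le_of_sq_div_one_add_le hq hr
    ((locNorm_sq_div_le_dotProduct_grad_sub Lam hsym hx hy).trans
      (hcs.trans (mul_le_mul_of_nonneg_right h hq)))

end Barrier

theorem stmt11_general {U L : ℕ}
    (Lam : (Fin U → ℝ) →ₗ[ℝ] Matrix (Fin L) (Fin L) ℝ)
    (hinj : Function.Injective Lam) (hsym : ∀ v, (Lam v).IsSymm)
    (x₁ : Fin U → ℝ) (hx₁ : (Lam x₁).PosDef)
    (e : Fin U → ℝ) (he : e = -grad Lam x₁)
    (r : ℝ) (hr0 : 0 < r)
    (t : Fin U → ℝ) (c : ℝ) (hc0 : 0 < c)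
    (hc : ((1 + r) / r) * dualNorm Lam x₁ t ≤ c) :
    (Lam ((hess Lam (c⁻¹ • x₁))⁻¹.mulVec (t + c • e))).PosSemidef ∧
      ∀ yc : Fin U → ℝ, (Lam yc).PosDef → -grad Lam yc = t + c • e →
        locNorm Lam (c⁻¹ • x₁) (c⁻¹ • x₁ - yc) ≤ r := by
  have hc' : c⁻¹ ≠ 0 := inv_ne_zero hc0.ne'
  set x := c⁻¹ • x₁
  have hx : (Lam x).PosDef := by
    rw [map_smul]
    exact hx₁.smul (inv_pos.mpr hc0)
  have hH : (hess Lam x).PosDef := posDef_hess Lam hinj hsym hx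
  have hgrad : grad Lam x = -(c • e) := by
    rw [grad_smul Lam hx₁.isUnit_det hc', inv_inv, he, smul_neg, neg_neg]
  have hdual : dualNorm Lam x t ≤ r / (1 + r) := by
    rw [dualNorm_smul Lam hx₁.isUnit_det (posDef_hess Lam hinj hsym hx₁).isUnit_det hc',
      abs_of_pos (inv_pos.mpr hc0), inv_mul_le_iff₀ hc0, mul_div_assoc', le_div_iff₀ (by linarith)]
    rw [div_mul_eq_mul_div, div_le_iff₀ hr0] at hc
    linarith
  refine ⟨?_, fun y hy hgy => ?_⟩
  · have hsplit : (hess Lam x)⁻¹ *ᵥ (t + c • e) = x + (hess Lam x)⁻¹ *ᵥ t := by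
      rw [mulVec_add, add_comm, ← neg_neg (c • e), ← hgrad, ← hess_mulVec_self Lam hx.isUnit_det,
        mulVec_mulVec, nonsing_inv_mul _ hH.isUnit_det, one_mulVec]
    rw [hsplit]
    refine posSemidef_add_of_locNorm_le_one Lam hsym hx ?_
    rw [locNorm_hess_inv_mulVec Lam hH]
    exact hdual.trans ((div_le_one (by linarith)).mpr (by linarith))
  · have hgrad_sub : grad Lam x - grad Lam y = t := by
      rw [hgrad, ← neg_neg (grad Lam y), hgy]
      abel
    refine locNorm_sub_le_of_dualNorm_grad_sub_le Lam hinj hsym hx hy hr0 ?_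
    rwa [hgrad_sub]

/-- universal certificates. If `e = -g(x₁)`, `r ∈ (0,1/2]` and
`c ≥ ((1+r)/r)·‖t‖*_{x₁}`, then `c⁻¹x₁` is a dual certificate of `t + c·e`, and
the gradient certificate `y_c` of `t + c·e` satisfies `‖c⁻¹x₁ − y_c‖_{c⁻¹x₁} ≤ r`. -/
theorem stmt11 {U L : ℕ} (hU : 0 < U) (hL : 0 < L)
    (Lam : (Fin U → ℝ) →ₗ[ℝ] Matrix (Fin L) (Fin L) ℝ)
    (hinj : Function.Injective Lam) (hsym : ∀ v, (Lam v).IsSymm)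
    (x₁ : Fin U → ℝ) (hx₁ : (Lam x₁).PosDef)
    (e : Fin U → ℝ) (he : e = -grad Lam x₁)
    (r : ℝ) (hr0 : 0 < r) (hr : r ≤ 1 / 2)
    (t : Fin U → ℝ) (c : ℝ) (hc0 : 0 < c)
    (hc : ((1 + r) / r) * dualNorm Lam x₁ t ≤ c) :
    (Lam ((hess Lam (c⁻¹ • x₁))⁻¹.mulVec (t + c • e))).PosSemidef ∧
      ∀ yc : Fin U → ℝ, (Lam yc).PosDef → -grad Lam yc = t + c • e →
        locNorm Lam (c⁻¹ • x₁) (c⁻¹ • x₁ - yc) ≤ r :=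
  stmt11_general Lam hinj hsym x₁ hx₁ e he r hr0 t c hc0 hc
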